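/- arXiv:math/0703707 — 2 statements merged into one kernel-verified Lean document; each statement's English description precedes it below -/
import Mathlib

section
/- Let p be an odd prime, d ≥ 2 with d ∣ p−1, f = (p−1)/d. For a ∈ 𝔽_p^* with α ≡ ind_ω(a) mod d, the least k such that a is a sum of k nonzero d-th powers in 𝔽_p equals min{ k ≥ 1 : f^k + Σ_{i=0}^{d−1} η_i^k · η_{i+α+θ} ≠ 0 }. -/
/-! Let `ψ x = ζ ^ x.val` be the standard additive character of `𝔽_p` and `H = ⟨ω^d⟩` the group of
nonzero `d`-th powers. Orthogonality of `ψ` shows that `p` times the number of `k`-tuples in `H`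
summing to `a` is `∑_t S(t)^k ψ(-ta)` with `S(t) = ∑_{h ∈ H} ψ(th)`. The term `t = 0` contributes
`f^k`. For `t = ω^(du+i)` one has `S(t) = η_i`, and since `-1 = ω^((p-1)/2)` with
`(p-1)/2 ≡ θ (mod d)`, summing `ψ(-ta)` over `u` gives `η_(i+α+θ)`. Hence the expression in the
theorem is `p` times a count, which is nonzero exactly when `a` is a sum of `k` nonzero `d`-th
powers. -/

open Finset

/-- The Gauss period `η_i = Σ_{u=0}^{f-1} ζ^{ω^{du+i}}`. -/
noncomputable def gaussPeriod (p d f : ℕ) (ω : (ZMod p)ˣ) (ζ : ℂ) (i : ℕ) : ℂ :=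
  ∑ u ∈ Finset.range f, ζ ^ (((ω : ZMod p) ^ (d * u + i)).val)

/-- The cyclotomic number `(i,j)` of order `d`. -/
noncomputable def cycNum (p d f : ℕ) (ω : (ZMod p)ˣ) (i j : ℕ) : ℕ :=
  Nat.card {uv : ℕ × ℕ // uv.1 < f ∧ uv.2 < f ∧
    (1 : ZMod p) + (ω : ZMod p) ^ (d * uv.1 + i) = (ω : ZMod p) ^ (d * uv.2 + j)}

/-- The cyclotomic integer `n(k,ν) = Σ_{i=0}^{d-1} η_i^k · η_{i+ν}`. -/
noncomputable def nInt (p d f : ℕ) (ω : (ZMod p)ˣ) (ζ : ℂ) (k ν : ℕ) : ℂ :=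
  ∑ i ∈ Finset.range d, (gaussPeriod p d f ω ζ i) ^ k * gaussPeriod p d f ω ζ (i + ν)

/-- `θ = 0` if `f` is even, `θ = d/2` if `f` is odd. -/
def theta (d f : ℕ) : ℕ := if Even f then 0 else d / 2

/-- `N(k,a)`: the number of `k`-tuples of nonzero `d`-th powers summing to `a`. -/
noncomputable def waringCount (p d k : ℕ) (a : ZMod p) : ℕ :=
  Nat.card {t : Fin k → ZMod p //
    (∀ i, ∃ b : (ZMod p)ˣ, ((b : ZMod p)) ^ d = t i) ∧ ∑ i, t i = a}

/-- `s_d(p,a)`: the least `k ≥ 1` such that `a` is a sum of `k` nonzero `d`-th powers. -/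
noncomputable def sWaring (p d : ℕ) (a : ZMod p) : ℕ :=
  sInf {k | 1 ≤ k ∧ ∃ u : Fin k → (ZMod p)ˣ, a = ∑ i, ((u i : ZMod p)) ^ d}

/-- `g_d(p) = max_{a ∈ 𝔽_p^*} s_d(p,a)`. -/
noncomputable def gWaring (p d : ℕ) : ℕ :=
  sSup {s | ∃ a : (ZMod p)ˣ, s = sWaring p d (a : ZMod p)}

/-- Product of a chain of cyclotomic numbers `(a,x₁)(x₁,x₂)⋯(xₘ,b)`. -/
noncomputable def chainProd (c : ℕ → ℕ → ℕ) (a b : ℕ) : List ℕ → ℕ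
  | [] => c a b
  | x :: xs => c a x * chainProd c x b xs

/-- Sum over all chains of `m` intermediate indices `0 ≤ i < d` of the products
`(a,i₂)(i₂,i₃)⋯(i_{m+1},b)` of consecutive cyclotomic numbers. -/
noncomputable def chainSum (d : ℕ) (c : ℕ → ℕ → ℕ) (a b m : ℕ) : ℕ :=
  ∑ v : Fin m → Fin d, chainProd c a b (List.ofFn fun i => ((v i : ℕ)))

theorem Function.Periodic.sum_range_add {M : Type*} [AddCancelCommMonoid M] {G : ℕ → M} {f : ℕ}
    (hG : Function.Periodic G f) (q : ℕ) :
    ∑ u ∈ range f, G (u + q) = ∑ u ∈ range f, G u := by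
  induction q with
  | zero => rfl
  | succ q ih =>
    rw [← ih]
    refine add_right_cancel (b := G q) ?_
    calc ∑ u ∈ range f, G (u + (q + 1)) + G q = ∑ u ∈ range (f + 1), G (u + q) := by
          rw [sum_range_succ']; simp only [zero_add, add_right_comm _ 1 q, add_assoc]
      _ = ∑ u ∈ range f, G (u + q) + G q := by rw [sum_range_succ, add_comm f q, hG q]

theorem Finset.sum_range_mul_eq_sum_sum {M : Type*} [AddCommMonoid M] (F : ℕ → M) (d f : ℕ) :
    ∑ n ∈ range (d * f), F n = ∑ i ∈ range d, ∑ u ∈ range f, F (d * u + i) := by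
  induction f with
  | zero => simp
  | succ f ih =>
    rw [Nat.mul_succ, sum_range_add, ih, ← sum_add_distrib]
    exact sum_congr rfl fun i _ => (sum_range_succ _ _).symm

theorem Fintype.sum_eq_sum_range_orderOf_pow {G M : Type*} [Group G] [Fintype G]
    [AddCommMonoid M] {ω : G} (hω : ∀ x : G, x ∈ Subgroup.zpowers ω) (g : G → M) :
    ∑ x, g x = ∑ n ∈ range (orderOf ω), g (ω ^ n) := by
  classical
  rw [← IsCyclic.image_range_orderOf hω, sum_image]
  intro m hm n hn
  exact pow_injOn_Iio_orderOf (by simpa using hm) (by simpa using hn)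

theorem Fintype.sum_eq_add_sum_units {K M : Type*} [GroupWithZero K] [Fintype K] [DecidableEq K]
    [AddCommMonoid M] (g : K → M) :
    ∑ t, g t = g 0 + ∑ x : Kˣ, g x := by
  rw [Fintype.sum_eq_add_sum_subtype_ne g 0]
  congr 1
  exact (Fintype.sum_equiv unitsEquivNeZero _ _ fun _ => rfl).symm

theorem AddChar.map_sum_eq_prod {ι A M : Type*} [AddCommMonoid A] [CommMonoid M]
    (ψ : AddChar A M) (s : Finset ι) (g : ι → A) :
    ψ (∑ i ∈ s, g i) = ∏ i ∈ s, ψ (g i) :=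
  map_prod ψ.toMonoidHom (fun i => Multiplicative.ofAdd (g i)) s

theorem AddChar.card_mul_card_filter_sum_eq {R R' ι : Type*} [CommRing R] [Fintype R]
    [DecidableEq R] [CommRing R'] [IsDomain R'] [Fintype ι] {ψ : AddChar R R'}
    (hψ : ψ.IsPrimitive) (c : ι → R) (a : R) (k : ℕ) :
    (Fintype.card R : R') * #{v : Fin k → ι | ∑ j, c (v j) = a}
      = ∑ t, (∑ i, ψ (t * c i)) ^ k * ψ (-(t * a)) := by
  calc (Fintype.card R : R') * #{v : Fin k → ι | ∑ j, c (v j) = a}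
      = ∑ v : Fin k → ι, if ∑ j, c (v j) - a = 0 then (Fintype.card R : R') else 0 := by
        rw [card_filter]
        push_cast
        simp only [mul_sum, sub_eq_zero, mul_ite, mul_one, mul_zero]
    _ = ∑ v : Fin k → ι, ∑ t, ψ (t * (∑ j, c (v j) - a)) := by
        simp only [AddChar.sum_mulShift _ hψ, Nat.cast_ite, Nat.cast_zero]
    _ = ∑ t, ∑ v : Fin k → ι, (∏ j, ψ (t * c (v j))) * ψ (-(t * a)) := by
        rw [sum_comm]
        simp only [sub_eq_add_neg, mul_add, mul_neg, mul_sum, AddChar.map_add_eq_mul,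
          AddChar.map_sum_eq_prod]
    _ = ∑ t, (∑ i, ψ (t * c i)) ^ k * ψ (-(t * a)) := by
        simp only [← sum_mul, Fintype.sum_pow]

theorem IsPrimitiveRoot.pow_eq_neg_one {R : Type*} [CommRing R] [NoZeroDivisors R] {ζ : R}
    {m : ℕ} (h : IsPrimitiveRoot ζ (2 * m)) (hm : m ≠ 0) : ζ ^ m = -1 := by
  apply IsPrimitiveRoot.eq_neg_one_of_two_right
  simpa [Nat.mul_div_cancel _ (Nat.pos_of_ne_zero hm)] using h.pow_of_dvd hm (dvd_mul_left m 2)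

theorem exists_pow_eq_iff_exists_pow_mul {M : Type*} [Monoid M] {ω : M} {d f : ℕ} [NeZero f]
    (hω : ∀ x : M, ∃ n : ℕ, ω ^ n = x) (hωf : ω ^ (d * f) = 1) (y : M) :
    (∃ x : M, x ^ d = y) ↔ ∃ u : Fin f, ω ^ (d * u) = y := by
  constructor
  · rintro ⟨x, rfl⟩
    obtain ⟨n, rfl⟩ := hω x
    refine ⟨⟨n % f, Nat.mod_lt _ (NeZero.pos f)⟩, ?_⟩
    rw [pow_mul] at hωf ⊢
    rw [← pow_eq_pow_mod n hωf, ← pow_mul, ← pow_mul, mul_comm]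
  · rintro ⟨u, rfl⟩
    exact ⟨ω ^ (u : ℕ), by rw [← pow_mul, mul_comm]⟩

theorem exists_mul_div_two_eq_theta_add_mul {d f : ℕ} (h : Even (d * f)) :
    ∃ q, d * f / 2 = theta d f + d * q := by
  unfold theta
  split_ifs with hf
  · obtain ⟨q, rfl⟩ := hf
    exact ⟨q, Nat.div_eq_of_eq_mul_left two_pos (by ring)⟩
  · obtain ⟨e, rfl⟩ := (Nat.even_mul.1 h).resolve_right hf
    obtain ⟨q, rfl⟩ := Nat.not_even_iff_odd.1 hf
    refine ⟨q, ?_⟩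
    rw [Nat.div_eq_of_eq_mul_left two_pos (by ring : (e + e) * (2 * q + 1) = e * (2 * q + 1) * 2),
      show (e + e) / 2 = e by omega]
    ring

theorem exists_sum_units_pow_eq_iff {R : Type*} [Semiring R] {ω : Rˣ} {d f : ℕ} [NeZero f]
    (hω : ∀ x : Rˣ, ∃ n : ℕ, ω ^ n = x) (hωf : ω ^ (d * f) = 1) (a : R) (k : ℕ) :
    (∃ u : Fin k → Rˣ, a = ∑ j, (u j : R) ^ d)
      ↔ ∃ v : Fin k → Fin f, ∑ j, (ω : R) ^ (d * (v j : ℕ)) = a := by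
  have hpow := exists_pow_eq_iff_exists_pow_mul hω hωf
  constructor
  · rintro ⟨u, rfl⟩
    choose v hv using fun j => (hpow (u j ^ d)).1 ⟨u j, rfl⟩
    exact ⟨v, sum_congr rfl fun j _ => by simp only [← Units.val_pow_eq_pow_val, hv j]⟩
  · rintro ⟨v, rfl⟩
    choose u hu using fun j => (hpow (ω ^ (d * (v j : ℕ)))).2 ⟨v j, rfl⟩
    exact ⟨u, sum_congr rfl fun j _ => by simp only [← Units.val_pow_eq_pow_val, hu j]⟩

section GaussPeriod

variable {p d f : ℕ} {ω : (ZMod p)ˣ} {ζ : ℂ}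

theorem gaussPeriod_add_mul (hωf : (ω : ZMod p) ^ (d * f) = 1) (n q : ℕ) :
    gaussPeriod p d f ω ζ (n + d * q) = gaussPeriod p d f ω ζ n := by
  have hG : Function.Periodic (fun u => ζ ^ ((ω : ZMod p) ^ (d * u + n)).val) f := fun u => by
    simp only [show d * (u + f) + n = d * u + n + d * f by ring, pow_add _ (d * u + n), hωf,
      mul_one]
  rw [gaussPeriod, gaussPeriod, ← hG.sum_range_add q]
  exact sum_congr rfl fun u _ => by ring_nf

theorem sum_zmodChar_pow_mul_pow [NeZero p] (hζ : ζ ^ p = 1) (n : ℕ) :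
    ∑ u ∈ range f, AddChar.zmodChar p hζ ((ω : ZMod p) ^ (d * u) * (ω : ZMod p) ^ n)
      = gaussPeriod p d f ω ζ n := by
  simp only [← pow_add]
  rfl

theorem neg_eq_pow_theta_add_mul [Fact p.Prime] (hodd : Odd p) (hdf : d * f = p - 1)
    (horder : orderOf ω = d * f) (a : (ZMod p)ˣ) (α m : ℕ)
    (hα : (a : ZMod p) = (ω : ZMod p) ^ (α + d * m)) :
    ∃ q, -(a : ZMod p) = (ω : ZMod p) ^ (α + theta d f + d * q) := by
  have hp := Fact.out (p := p.Prime)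
  have heven : Even (d * f) := by rw [hdf]; exact Nat.Odd.sub_odd hodd odd_one
  obtain ⟨q, hq⟩ := exists_mul_div_two_eq_theta_add_mul heven
  have hprim : IsPrimitiveRoot (ω : ZMod p) (2 * (d * f / 2)) := by
    rw [Nat.two_mul_div_two_of_even heven, ← horder, ← orderOf_units]
    exact IsPrimitiveRoot.orderOf _
  have hneg_one := hprim.pow_eq_neg_one (by have := hp.two_le; obtain ⟨r, hr⟩ := hodd; omega)
  refine ⟨q + m, ?_⟩
  rw [neg_eq_neg_one_mul, ← hneg_one, hq, hα, ← pow_add]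
  ring_nf

theorem card_mul_card_filter_eq_gaussPeriods [Fact p.Prime] (hodd : Odd p)
    (hζ : IsPrimitiveRoot ζ p) (hdf : d * f = p - 1)
    (hω : ∀ x : (ZMod p)ˣ, x ∈ Subgroup.zpowers ω) (horder : orderOf ω = d * f)
    (a : (ZMod p)ˣ) (α m : ℕ) (hα : (a : ZMod p) = (ω : ZMod p) ^ (α + d * m)) (k : ℕ) :
    (p : ℂ) * #{v : Fin k → Fin f | ∑ j, (ω : ZMod p) ^ (d * (v j : ℕ)) = a}
      = (f : ℂ) ^ k + ∑ i ∈ range d,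
          gaussPeriod p d f ω ζ i ^ k * gaussPeriod p d f ω ζ (i + α + theta d f) := by
  have hωf : (ω : ZMod p) ^ (d * f) = 1 := by
    rw [← Units.val_pow_eq_pow_val, ← horder, pow_orderOf_eq_one, Units.val_one]
  obtain ⟨q, hq⟩ := neg_eq_pow_theta_add_mul hodd hdf horder a α m hα
  have hchar := AddChar.card_mul_card_filter_sum_eq
    (AddChar.zmodChar_primitive_of_primitive_root p hζ)
    (fun u : Fin f => (ω : ZMod p) ^ (d * u)) a k
  rw [ZMod.card] at hchar
  rw [hchar, Fintype.sum_eq_add_sum_units, Fintype.sum_eq_sum_range_orderOf_pow hω, horder,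
    sum_range_mul_eq_sum_sum]
  congr 1
  · simp
  set ψ := AddChar.zmodChar p hζ.pow_eq_one
  refine sum_congr rfl fun i _ => ?_
  have hperiod (u : ℕ) :
      ∑ j : Fin f, ψ (((ω ^ (d * u + i) : (ZMod p)ˣ) : ZMod p) * ω ^ (d * j))
        = gaussPeriod p d f ω ζ i := by
    rw [← gaussPeriod_add_mul hωf i u, ← sum_zmodChar_pow_mul_pow hζ.pow_eq_one, sum_range]
    exact sum_congr rfl fun j _ => congrArg ψ (by push_cast; ring)
  have hshift : ∑ u ∈ range f, ψ (-(((ω ^ (d * u + i) : (ZMod p)ˣ) : ZMod p) * a))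
      = gaussPeriod p d f ω ζ (i + α + theta d f) := by
    rw [← gaussPeriod_add_mul hωf _ q, ← sum_zmodChar_pow_mul_pow hζ.pow_eq_one]
    exact sum_congr rfl fun u _ => congrArg ψ (by rw [← mul_neg, hq]; push_cast; ring)
  simp only [hperiod, ← mul_sum, hshift]

end GaussPeriod

theorem sWaring_eq_sInf_gaussPeriods_general (p d f : ℕ) (hp : p.Prime) (hodd : Odd p)
    (hdvd : d ∣ p - 1) (hf : f = (p - 1) / d)
    (ω : (ZMod p)ˣ) (hω : ∀ x : (ZMod p)ˣ, ∃ n : ℕ, ω ^ n = x)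
    (ζ : ℂ) (hζ : IsPrimitiveRoot ζ p)
    (a : (ZMod p)ˣ) (α : ℕ) (hα : ∃ m : ℕ, (a : ZMod p) = (ω : ZMod p) ^ (α + d * m)) :
    sWaring p d (a : ZMod p)
      = sInf {k | 1 ≤ k ∧ (f : ℂ) ^ k + ∑ i ∈ Finset.range d,
          (gaussPeriod p d f ω ζ i) ^ k * gaussPeriod p d f ω ζ (i + α + theta d f) ≠ 0} := by
  have := Fact.mk hp
  obtain ⟨m, hm⟩ := hα
  have hdf : d * f = p - 1 := by rw [hf, Nat.mul_div_cancel' hdvd]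
  have : NeZero f := ⟨by rintro rfl; have := hp.two_le; omega⟩
  have hzpowers (x : (ZMod p)ˣ) : x ∈ Subgroup.zpowers ω := by
    obtain ⟨n, rfl⟩ := hω x
    exact Subgroup.npow_mem_zpowers ω n
  have horder : orderOf ω = d * f := by
    rw [orderOf_eq_card_of_forall_mem_zpowers hzpowers, Nat.card_eq_fintype_card,
      ZMod.card_units, hdf]
  unfold sWaring
  congr 1
  ext k
  refine and_congr_right fun _ => ?_
  rw [exists_sum_units_pow_eq_iff hω (horder ▸ pow_orderOf_eq_one ω),
    ← card_mul_card_filter_eq_gaussPeriods hodd hζ hdf hzpowers horder a α m hm k,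
    mul_ne_zero_iff, Nat.cast_ne_zero, Nat.cast_ne_zero, card_ne_zero, filter_nonempty_iff]
  simp [hp.ne_zero]

/-- `s_d(p,a) = min{k ≥ 1 : f^k + Σ_{i=0}^{d-1} η_i^k·η_{i+α+θ} ≠ 0}`. -/
theorem sWaring_eq_sInf_gaussPeriods (p d f : ℕ) (hp : p.Prime) (hodd : Odd p)
    (hd : 2 ≤ d) (hdvd : d ∣ p - 1) (hf : f = (p - 1) / d)
    (ω : (ZMod p)ˣ) (hω : ∀ x : (ZMod p)ˣ, ∃ n : ℕ, ω ^ n = x)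
    (ζ : ℂ) (hζ : IsPrimitiveRoot ζ p)
    (a : (ZMod p)ˣ) (α : ℕ) (hα : ∃ m : ℕ, (a : ZMod p) = (ω : ZMod p) ^ (α + d * m)) :
    sWaring p d (a : ZMod p)
      = sInf {k | 1 ≤ k ∧ (f : ℂ) ^ k + ∑ i ∈ Finset.range d,
          (gaussPeriod p d f ω ζ i) ^ k * gaussPeriod p d f ω ζ (i + α + theta d f) ≠ 0} :=
  sWaring_eq_sInf_gaussPeriods_general p d f hp hodd hdvd hf ω hω ζ hζ a α hα
end

section
/- Let p be an odd prime, d ≥ 2 with d ∣ p−1, f = (p−1)/d. For every 0 ≤ ν ≤ d−1: n(0,ν) = Σ_{i=0}^{d−1} η_{i+ν} = −1, and n(1,ν) = Σ_{i=0}^{d−1} η_i · η_{i+ν} = p·δ_{θν} − f. -/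
/-!
With `ψ x = ζ ^ x.val`, the standard additive character of `ZMod p`, the Gauss period `η_i` is the
sum of `ψ` over the coset `ω^i H` of the subgroup `H` of `d`-th powers. Summing over `i` sweeps out
all of `𝔽_p^*`, and `∑_{x ≠ 0} ψ (x c) = p [c = 0] - 1`, which gives `n(0,ν) = -1`. Shifting the
second summation index by the first (the exponents are periodic mod `d f = p - 1`) rewrites
`η_i η_{i+ν}` as `∑_{u,t} ψ (ω^{du+i} (1 + ω^{dt+ν}))`, so
`n(1,ν) = ∑_{t<f} (p [ω^{dt+ν} = -1] - 1)`. As `ω^{(p-1)/2} = -1`, some `t` contributes exactly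
when `(p-1)/2 ≡ ν (mod d)`, and `(p-1)/2 mod d` is `θ`.
-/

open Finset

section Indexing

variable {M : Type*} [AddCommMonoid M]

theorem sum_range_sum_range_mul_add (g : ℕ → M) (d f : ℕ) :
    ∑ i ∈ range d, ∑ u ∈ range f, g (d * u + i) = ∑ j ∈ range (d * f), g j := by
  induction f with
  | zero => simp
  | succ f ih =>
    simp only [sum_range_succ, sum_add_distrib, ih, mul_add_one, sum_range_add]

theorem Function.Periodic.sum_range_add_s6 {F : ℕ → M} {f : ℕ} (hF : Function.Periodic F f)
    (s : ℕ) : ∑ t ∈ range f, F (t + s) = ∑ t ∈ range f, F t := by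
  induction s generalizing F with
  | zero => rfl
  | succ s ih =>
    calc ∑ t ∈ range f, F (t + (s + 1)) = ∑ t ∈ range f, F (t + 1) := ih (hF.add_const 1)
      _ = ∑ t ∈ range f, F t := by
          cases f with
          | zero => rfl
          | succ n => rw [sum_range_succ, sum_range_succ' F, ← zero_add (n + 1), hF 0]

theorem sum_eq_apply_zero_add_sum_units {G : Type*} [GroupWithZero G] [Fintype G] [DecidableEq G]
    (g : G → M) : ∑ x, g x = g 0 + ∑ x : Gˣ, g x := by
  rw [← add_sum_erase _ _ (mem_univ 0),
    sum_subtype _ (fun x => by simp : ∀ x, x ∈ univ.erase (0 : G) ↔ x ≠ 0)]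
  exact congrArg _ (Fintype.sum_equiv unitsEquivNeZero _ _ fun _ => rfl).symm

theorem sum_range_orderOf_pow {G : Type*} [Group G] [Fintype G] [DecidableEq G] {ω : G}
    (hω : ∀ x, x ∈ Subgroup.zpowers ω) (g : G → M) :
    ∑ j ∈ range (orderOf ω), g (ω ^ j) = ∑ x, g x := by
  rw [← IsCyclic.image_range_orderOf hω, sum_image]
  intro a ha b hb
  exact pow_injOn_Iio_orderOf (by simpa using ha) (by simpa using hb)

end Indexing

section GaussPeriod

variable {F R : Type*} [Field F] [CommRing R]

def charGaussPeriod (ψ : AddChar F R) (ω : Fˣ) (d f i : ℕ) : R :=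
  ∑ u ∈ range f, ψ ((ω : F) ^ (d * u + i))

variable {ψ : AddChar F R} {ω : Fˣ} {d f : ℕ}

theorem charGaussPeriod_eq_sum_add (hω : ω ^ (d * f) = 1) (s i : ℕ) :
    charGaussPeriod ψ ω d f i = ∑ t ∈ range f, ψ ((ω : F) ^ (d * (t + s) + i)) := by
  refine ((Function.Periodic.sum_range_add_s6 (fun t => ?_) s).symm)
  simp only [mul_add, add_right_comm _ (d * f), pow_add _ _ (d * f), ← Units.val_pow_eq_pow_val, hω,
    Units.val_one, mul_one]

theorem charGaussPeriod_mul_charGaussPeriod_add (hω : ω ^ (d * f) = 1) (i ν : ℕ) :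
    charGaussPeriod ψ ω d f i * charGaussPeriod ψ ω d f (i + ν) =
      ∑ u ∈ range f, ∑ t ∈ range f, ψ ((ω : F) ^ (d * u + i) * (1 + (ω : F) ^ (d * t + ν))) := by
  rw [charGaussPeriod, sum_mul]
  refine sum_congr rfl fun u _ => ?_
  rw [charGaussPeriod_eq_sum_add hω u, mul_sum]
  refine sum_congr rfl fun t _ => ?_
  rw [← AddChar.map_add_eq_mul]
  ring_nf

variable [Fintype F] [DecidableEq F] [IsDomain R]

theorem AddChar.sum_units_mulShift (hψ : ψ.IsPrimitive) (c : F) :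
    ∑ x : Fˣ, ψ (x * c) = (if c = 0 then (Fintype.card F : R) else 0) - 1 := by
  have h := AddChar.sum_mulShift c hψ
  rw [sum_eq_apply_zero_add_sum_units (fun x => ψ (x * c)), zero_mul,
    AddChar.map_zero_eq_one] at h
  push_cast at h
  rw [← h, add_sub_cancel_left]

theorem AddChar.sum_range_orderOf_pow_mul (hψ : ψ.IsPrimitive) {ω : Fˣ}
    (hω : ∀ x, x ∈ Subgroup.zpowers ω) (c : F) :
    ∑ j ∈ range (orderOf ω), ψ ((ω : F) ^ j * c) =
      (if c = 0 then (Fintype.card F : R) else 0) - 1 := by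
  rw [← AddChar.sum_units_mulShift hψ c, ← sum_range_orderOf_pow hω]
  simp only [Units.val_pow_eq_pow_val]

theorem sum_charGaussPeriod_add (hψ : ψ.IsPrimitive) (hω : ∀ x, x ∈ Subgroup.zpowers ω)
    (hord : orderOf ω = d * f) (ν : ℕ) :
    ∑ i ∈ range d, charGaussPeriod ψ ω d f (i + ν) = -1 := by
  calc ∑ i ∈ range d, charGaussPeriod ψ ω d f (i + ν)
      = ∑ i ∈ range d, ∑ u ∈ range f, ψ ((ω : F) ^ (d * u + i) * (ω : F) ^ ν) := by
        simp only [charGaussPeriod, pow_add, mul_assoc]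
    _ = -1 := by
        rw [sum_range_sum_range_mul_add (fun j => ψ ((ω : F) ^ j * (ω : F) ^ ν)), ← hord,
          AddChar.sum_range_orderOf_pow_mul hψ hω, if_neg (by simp), zero_sub]

theorem sum_charGaussPeriod_mul_charGaussPeriod_add (hψ : ψ.IsPrimitive)
    (hω : ∀ x, x ∈ Subgroup.zpowers ω) (hord : orderOf ω = d * f) (ν : ℕ) :
    ∑ i ∈ range d, charGaussPeriod ψ ω d f i * charGaussPeriod ψ ω d f (i + ν) =
      Fintype.card F * #{t ∈ range f | (ω : F) ^ (d * t + ν) = -1} - f := by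
  have hω1 : ω ^ (d * f) = 1 := hord ▸ pow_orderOf_eq_one ω
  simp only [charGaussPeriod_mul_charGaussPeriod_add hω1]
  rw [sum_congr rfl fun i _ => sum_comm, sum_comm, sum_congr rfl fun t _ => by
    rw [sum_range_sum_range_mul_add (fun j => ψ ((ω : F) ^ j * (1 + (ω : F) ^ (d * t + ν)))),
      ← hord, AddChar.sum_range_orderOf_pow_mul hψ hω]]
  simp only [add_eq_zero_iff_eq_neg']
  simp [sum_sub_distrib, ← sum_filter, mul_comm]

end GaussPeriod

theorem Units.pow_eq_neg_one_iff_modEq {R : Type*} [CommRing R] [IsDomain R] {ω : Rˣ} {m : ℕ}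
    (hm : 0 < m) (hord : orderOf ω = 2 * m) (n : ℕ) :
    (ω : R) ^ n = -1 ↔ n ≡ m [MOD 2 * m] := by
  have hsq : ((ω : R) ^ m) ^ 2 = 1 := by
    rw [← pow_mul, mul_comm, ← hord, ← Units.val_pow_eq_pow_val, pow_orderOf_eq_one,
      Units.val_one]
  have hne : (ω : R) ^ m ≠ 1 := by
    rw [← Units.val_pow_eq_pow_val, Ne, Units.val_eq_one]
    exact pow_ne_one_of_lt_orderOf hm.ne' (by omega)
  have hneg : (ω : R) ^ m = -1 := (sq_eq_one_iff.mp hsq).resolve_left hne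
  rw [← hneg, ← hord, ← pow_eq_pow_iff_modEq, ← Units.val_pow_eq_pow_val,
    ← Units.val_pow_eq_pow_val, Units.val_inj]

theorem theta_eq_mod {d f : ℕ} (h : Even (d * f)) : theta d f = d * f / 2 % d := by
  rcases Nat.even_or_odd f with ⟨j, rfl⟩ | ⟨j, rfl⟩
  · rw [theta, if_pos ⟨j, rfl⟩,
      Nat.div_eq_of_eq_mul_left two_pos (by ring : d * (j + j) = d * j * 2), Nat.mul_mod_right]
  · have hodd : ¬Even (2 * j + 1) := Nat.not_even_iff_odd.mpr ⟨j, rfl⟩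
    obtain ⟨k, rfl⟩ := (Nat.even_mul.mp h).resolve_right hodd
    rw [theta, if_neg hodd,
      Nat.div_eq_of_eq_mul_left two_pos (by ring : (k + k) * (2 * j + 1) = (k + (k + k) * j) * 2),
      Nat.add_mul_mod_self_left]
    rcases Nat.eq_zero_or_pos k with rfl | hk
    · rfl
    · rw [Nat.mod_eq_of_lt (by omega)]
      omega

theorem card_filter_mul_add_eq {d f ν m : ℕ} (hν : ν < d) (hm : m < d * f) :
    #{t ∈ range f | d * t + ν = m} = if m % d = ν then 1 else 0 := by
  have hd : 0 < d := by omega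
  have hiff : ∀ t, d * t + ν = m ↔ m / d = t ∧ m % d = ν := fun t => by
    rw [Nat.div_mod_unique hd, add_comm]; exact ⟨fun h => ⟨h, hν⟩, And.left⟩
  simp only [hiff]
  split_ifs with h
  · simp [h, filter_eq, Nat.div_lt_of_lt_mul hm]
  · simp [h]

theorem card_filter_pow_eq_neg_one {R : Type*} [CommRing R] [IsDomain R] [DecidableEq R]
    {ω : Rˣ} {d f ν : ℕ}
    (hord : orderOf ω = d * f) (heven : Even (d * f)) (hf : 0 < f) (hν : ν < d) :
    #{t ∈ range f | (ω : R) ^ (d * t + ν) = -1} = if theta d f = ν then 1 else 0 := by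
  set m := d * f / 2
  have h2m : d * f = 2 * m := (Nat.two_mul_div_two_of_even heven).symm
  have hpos : 0 < m := by have := Nat.mul_pos (by omega : 0 < d) hf; omega
  rw [theta_eq_mod heven, ← card_filter_mul_add_eq (f := f) hν (by omega : m < d * f)]
  congr 1
  refine filter_congr fun t ht => ?_
  have hlt : d * t + ν < d * f :=
    calc d * t + ν < d * (t + 1) := by rw [mul_add_one]; omega
      _ ≤ d * f := Nat.mul_le_mul_left d (mem_range.mp ht)
  rw [Units.pow_eq_neg_one_iff_modEq hpos (hord.trans h2m)]
  exact ⟨fun h => h.eq_of_lt_of_lt (by omega) (by omega), fun h => h ▸ rfl⟩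

theorem nInt_zero_and_one_general (p d f : ℕ) (hp : p.Prime) (hodd : Odd p)
    (hdvd : d ∣ p - 1) (hf : f = (p - 1) / d)
    (ω : (ZMod p)ˣ) (hω : ∀ x : (ZMod p)ˣ, ∃ n : ℕ, ω ^ n = x)
    (ζ : ℂ) (hζ : IsPrimitiveRoot ζ p)
    (ν : ℕ) (hν : ν < d) :
    nInt p d f ω ζ 0 ν = -1 ∧
    nInt p d f ω ζ 1 ν = (p : ℂ) * (if theta d f = ν then 1 else 0) - (f : ℂ) := by
  have : Fact p.Prime := ⟨hp⟩
  have hψ := AddChar.zmodChar_primitive_of_primitive_root p hζ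
  have hperiod : gaussPeriod p d f ω ζ = charGaussPeriod (AddChar.zmodChar p hζ.pow_eq_one) ω d f :=
    rfl
  have hgen : ∀ x, x ∈ Subgroup.zpowers ω := fun x =>
    let ⟨n, hn⟩ := hω x
    ⟨n, (zpow_natCast ω n).trans hn⟩
  have hdf : d * f = p - 1 := by rw [hf, Nat.mul_div_cancel' hdvd]
  have hord : orderOf ω = d * f := by
    rw [orderOf_eq_card_of_forall_mem_zpowers hgen, Nat.card_eq_fintype_card, ZMod.card_units, hdf]
  have heven : Even (d * f) := hdf ▸ Nat.Odd.sub_odd hodd odd_one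
  have hfpos : 0 < f := Nat.pos_of_ne_zero <| by
    rintro rfl
    have := hp.two_le
    omega
  refine ⟨?_, ?_⟩
  · simpa [nInt, hperiod] using sum_charGaussPeriod_add hψ hgen hord ν
  · simp only [nInt, pow_one, hperiod, sum_charGaussPeriod_mul_charGaussPeriod_add hψ hgen hord,
      ZMod.card, card_filter_pow_eq_neg_one hord heven hfpos hν]
    split_ifs <;> simp

/-- `n(0,ν) = −1` and `n(1,ν) = p·δ_{θν} − f`. -/
theorem nInt_zero_and_one (p d f : ℕ) (hp : p.Prime) (hodd : Odd p)
    (hd : 2 ≤ d) (hdvd : d ∣ p - 1) (hf : f = (p - 1) / d)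
    (ω : (ZMod p)ˣ) (hω : ∀ x : (ZMod p)ˣ, ∃ n : ℕ, ω ^ n = x)
    (ζ : ℂ) (hζ : IsPrimitiveRoot ζ p)
    (ν : ℕ) (hν : ν < d) :
    nInt p d f ω ζ 0 ν = -1 ∧
    nInt p d f ω ζ 1 ν = (p : ℂ) * (if theta d f = ν then 1 else 0) - (f : ℂ) :=
  nInt_zero_and_one_general p d f hp hodd hdvd hf ω hω ζ hζ ν hν
end
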